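/- arXiv:2603.19569 — 3 statements merged into one kernel-verified Lean document; each statement's English description precedes it below -/
import Mathlib

section
/- (Proposition 1.) Let θ ∈ ℝ^{1+q} have distinguished coordinate 0 and remaining coordinates partitioned into disjoint nonempty blocks B_M indexed by M in a finite set 𝓜, and write θ^M for the restriction of θ to block B_M. Let λ ≥ 0, α₁ ≥ 0, α₂ ≥ 0. Assume θ^M ≠ 0 for every M ∈ 𝓜. Let u ∈ ℝ^{1+q} satisfy ‖u‖₂ ≤ 1, and if θ ≠ 0 additionally u = θ/‖θ‖₂. Let u^𝓜 ∈ ℝ^{1+q} have coordinate 0 equal to 0 and, for each i ∈ B_M, (u^𝓜)_i = θ_i/‖θ^M‖₂. Let v ∈ ℝ^{1+q} have coordinate 0 equal to 0 and, for each i ∈ B_M, v_i = sign(θ_i) if θ_i ≠ 0 and v_i ∈ [−1, 1] otherwise. Set g = λu + λα₁u^𝓜 + λα₂v, and define weights w ∈ ℝ^{1+q} by w₀ = 0 and w_i = λα₁|θ_i|/‖θ^{M(i)}‖₂ + λα₂ for i ∈ B_{M(i)}. Then ‖S(g, w)‖₂ ≤ λ‖u‖₂, where S(g, w) is the componentwise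 soft-threshold with S(g, w)_i = sign(g_i)·(|g_i| − w_i)₊. -/
open scoped BigOperators

/-- Euclidean (ℓ2) norm of a finitely-indexed real vector. -/
noncomputable def euclNorm {α : Type*} [Fintype α] (f : α → ℝ) : ℝ :=
  Real.sqrt (∑ a, f a ^ 2)

/-!
The bound holds coordinatewise: `|S(g, w)_i| ≤ λ|u_i|`. On the distinguished coordinate
`g₀ = λu₀` and `w₀ = 0`. On a block coordinate the weight `w_i = λα₁|u^𝓜_i| + λα₂` is exactly
what the triangle inequality needs to absorb the two group-lasso subgradient terms, using
`|v_i| ≤ 1`; soft-thresholding by `w_i` then leaves at most `λ|u_i|`.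
-/

noncomputable def softThreshold (x t : ℝ) : ℝ :=
  Real.sign x * max (|x| - t) 0

lemma Real.abs_sign_le_one (x : ℝ) : |Real.sign x| ≤ 1 := by
  rcases lt_trichotomy x 0 with h | rfl | h
  · simp [Real.sign_of_neg h]
  · simp
  · simp [Real.sign_of_pos h]

lemma abs_softThreshold_le {x t a : ℝ} (ha : 0 ≤ a) (h : |x| ≤ a + t) :
    |softThreshold x t| ≤ a := by
  have hmax : 0 ≤ max (|x| - t) 0 := le_max_right _ _
  calc |softThreshold x t| = |Real.sign x| * max (|x| - t) 0 := by
        rw [softThreshold, abs_mul, abs_of_nonneg hmax]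
    _ ≤ 1 * max (|x| - t) 0 := mul_le_mul_of_nonneg_right (Real.abs_sign_le_one x) hmax
    _ ≤ a := by rw [one_mul]; exact max_le (by linarith) ha

lemma abs_add_mul_add_mul_le {x m c p q : ℝ} (hp : 0 ≤ p) (hq : 0 ≤ q) (hc : |c| ≤ 1) :
    |x + p * m + q * c| ≤ |x| + (p * |m| + q) := by
  have hqc : |q * c| ≤ q := by
    rw [abs_mul, abs_of_nonneg hq]
    exact mul_le_of_le_one_right hq hc
  calc |x + p * m + q * c| ≤ |x| + |p * m| + |q * c| :=
        (abs_add_le _ _).trans (add_le_add_left (abs_add_le _ _) _)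
    _ ≤ |x| + (p * |m| + q) := by rw [abs_mul, abs_of_nonneg hp]; linarith

lemma euclNorm_nonneg {α : Type*} [Fintype α] (f : α → ℝ) : 0 ≤ euclNorm f :=
  Real.sqrt_nonneg _

lemma euclNorm_mono {α : Type*} [Fintype α] {f h : α → ℝ} (hfh : ∀ a, |f a| ≤ |h a|) :
    euclNorm f ≤ euclNorm h :=
  Real.sqrt_le_sqrt <| Finset.sum_le_sum fun a _ => sq_le_sq.mpr (hfh a)

lemma euclNorm_const_mul {α : Type*} [Fintype α] {c : ℝ} (hc : 0 ≤ c) (f : α → ℝ) :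
    euclNorm (fun a => c * f a) = c * euclNorm f := by
  simp only [euclNorm, mul_pow, ← Finset.mul_sum]
  rw [Real.sqrt_mul (sq_nonneg c), Real.sqrt_sq hc]

theorem prop1_general {𝓜 : Type*} [Fintype 𝓜] (B : 𝓜 → Type*)
    [∀ M, Fintype (B M)]
    (θ u u𝓜 v g w : Option ((M : 𝓜) × B M) → ℝ)
    (lam α₁ α₂ : ℝ) (hlam : 0 ≤ lam) (hα₁ : 0 ≤ α₁) (hα₂ : 0 ≤ α₂)
    (hu𝓜0 : u𝓜 none = 0)
    (hu𝓜 : ∀ (M : 𝓜) (b : B M),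
      u𝓜 (some ⟨M, b⟩) = θ (some ⟨M, b⟩) / euclNorm (fun b' : B M => θ (some ⟨M, b'⟩)))
    (hv0 : v none = 0)
    (hv : ∀ (M : 𝓜) (b : B M),
      (θ (some ⟨M, b⟩) ≠ 0 → v (some ⟨M, b⟩) = Real.sign (θ (some ⟨M, b⟩))) ∧
      (θ (some ⟨M, b⟩) = 0 → v (some ⟨M, b⟩) ∈ Set.Icc (-1 : ℝ) 1))
    (hg : g = fun i => lam * u i + lam * α₁ * u𝓜 i + lam * α₂ * v i)
    (hw0 : w none = 0)
    (hw : ∀ (M : 𝓜) (b : B M),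
      w (some ⟨M, b⟩) =
        lam * α₁ * |θ (some ⟨M, b⟩)| / euclNorm (fun b' : B M => θ (some ⟨M, b'⟩)) + lam * α₂) :
    euclNorm (fun i => Real.sign (g i) * max (|g i| - w i) 0) ≤ lam * euclNorm u := by
  have hv_le : ∀ M b, |v (some ⟨M, b⟩)| ≤ 1 := fun M b => by
    rcases eq_or_ne (θ (some ⟨M, b⟩)) 0 with h | h
    · exact abs_le.mpr ((hv M b).2 h)
    · exact (hv M b).1 h ▸ Real.abs_sign_le_one _
  have hcoord : ∀ i, |g i| ≤ |lam * u i| + w i := by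
    rintro (_ | ⟨M, b⟩)
    · simp [hg, hu𝓜0, hv0, hw0]
    · have hw' : w (some ⟨M, b⟩) = lam * α₁ * |u𝓜 (some ⟨M, b⟩)| + lam * α₂ := by
        rw [hw, hu𝓜, abs_div, abs_of_nonneg (euclNorm_nonneg _), mul_div_assoc]
      rw [hg, hw']
      exact abs_add_mul_add_mul_le (mul_nonneg hlam hα₁) (mul_nonneg hlam hα₂) (hv_le M b)
  calc euclNorm (fun i => softThreshold (g i) (w i))
      ≤ euclNorm (fun i => lam * u i) :=
        euclNorm_mono fun i => abs_softThreshold_le (abs_nonneg _) (hcoord i)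
    _ = lam * euclNorm u := euclNorm_const_mul hlam u

/-- **Proposition 1.**  The coordinates of `θ ∈ ℝ^{1+q}` consist of a distinguished
coordinate (`none`) and disjoint nonempty blocks `B M` indexed by `M ∈ 𝓜`
(the coordinate `some ⟨M, b⟩` lies in block `M`).  Assume each block restriction
`θ^M` is nonzero; `u` is a subgradient of `‖·‖₂` at `θ` (so `‖u‖₂ ≤ 1`, with
`u = θ/‖θ‖₂` if `θ ≠ 0`); `u𝓜` vanishes at the distinguished coordinate and
equals `θ_i/‖θ^M‖₂` on block `M`; `v` vanishes at the distinguished coordinate,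
equals `sign(θ_i)` when `θ_i ≠ 0` and lies in `[−1,1]` otherwise.  With
`g = λu + λα₁u𝓜 + λα₂v` and weights `w` given by `w₀ = 0` and
`w_i = λα₁|θ_i|/‖θ^{M(i)}‖₂ + λα₂`, the componentwise soft-threshold
`S(g,w)_i = sign(g_i)·(|g_i| − w_i)₊` satisfies `‖S(g,w)‖₂ ≤ λ‖u‖₂`. -/
theorem prop1 {𝓜 : Type*} [Fintype 𝓜] (B : 𝓜 → Type*)
    [∀ M, Fintype (B M)] [∀ M, Nonempty (B M)]
    (θ u u𝓜 v g w : Option ((M : 𝓜) × B M) → ℝ)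
    (lam α₁ α₂ : ℝ) (hlam : 0 ≤ lam) (hα₁ : 0 ≤ α₁) (hα₂ : 0 ≤ α₂)
    (hθM : ∀ M : 𝓜, (fun b : B M => θ (some ⟨M, b⟩)) ≠ 0)
    (hu : euclNorm u ≤ 1)
    (hu' : θ ≠ 0 → u = fun i => θ i / euclNorm θ)
    (hu𝓜0 : u𝓜 none = 0)
    (hu𝓜 : ∀ (M : 𝓜) (b : B M),
      u𝓜 (some ⟨M, b⟩) = θ (some ⟨M, b⟩) / euclNorm (fun b' : B M => θ (some ⟨M, b'⟩)))
    (hv0 : v none = 0)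
    (hv : ∀ (M : 𝓜) (b : B M),
      (θ (some ⟨M, b⟩) ≠ 0 → v (some ⟨M, b⟩) = Real.sign (θ (some ⟨M, b⟩))) ∧
      (θ (some ⟨M, b⟩) = 0 → v (some ⟨M, b⟩) ∈ Set.Icc (-1 : ℝ) 1))
    (hg : g = fun i => lam * u i + lam * α₁ * u𝓜 i + lam * α₂ * v i)
    (hw0 : w none = 0)
    (hw : ∀ (M : 𝓜) (b : B M),
      w (some ⟨M, b⟩) =
        lam * α₁ * |θ (some ⟨M, b⟩)| / euclNorm (fun b' : B M => θ (some ⟨M, b'⟩)) + lam * α₂) :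
    euclNorm (fun i => Real.sign (g i) * max (|g i| - w i) 0) ≤ lam * euclNorm u :=
  prop1_general B θ u u𝓜 v g w lam α₁ α₂ hlam hα₁ hα₂ hu𝓜0 hu𝓜 hv0 hv hg hw0 hw
end

section
/- (Sequential strong rule.) Let c : ℝ → ℝ^n satisfy the Lipschitz condition ‖c(λ) − c(λ′)‖₂ ≤ |λ − λ′| for all λ, λ′ ∈ ℝ. If 0 < λ_m < λ_{m−1} and ‖c(λ_{m−1})‖₂ ≤ 2λ_m − λ_{m−1}, then ‖c(λ_m)‖₂ ≤ λ_m. -/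
theorem sequential_strong_rule_general {n : ℕ} (c : ℝ → EuclideanSpace ℝ (Fin n))
    (hLip : ∀ lam lam' : ℝ, ‖c lam - c lam'‖ ≤ |lam - lam'|)
    (lamPrev lamCur : ℝ) (hlt : lamCur < lamPrev)
    (hscreen : ‖c lamPrev‖ ≤ 2 * lamCur - lamPrev) :
    ‖c lamCur‖ ≤ lamCur := by
  have hstep : ‖c lamCur‖ ≤ ‖c lamPrev‖ + (lamPrev - lamCur) :=
    calc ‖c lamCur‖ ≤ ‖c lamPrev‖ + ‖c lamCur - c lamPrev‖ := norm_le_norm_add_norm_sub' _ _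
      _ ≤ ‖c lamPrev‖ + |lamCur - lamPrev| := by gcongr; exact hLip _ _
      _ = ‖c lamPrev‖ + (lamPrev - lamCur) := by
        rw [abs_sub_comm, abs_of_pos (sub_pos.mpr hlt)]
  linarith

/-- **Sequential strong rule.**  If `c : ℝ → ℝ^n` is Lipschitz with constant 1
(`‖c(λ) − c(λ′)‖₂ ≤ |λ − λ′|`), `0 < λ_m < λ_{m−1}`, and
`‖c(λ_{m−1})‖₂ ≤ 2λ_m − λ_{m−1}`, then `‖c(λ_m)‖₂ ≤ λ_m`. -/
theorem sequential_strong_rule {n : ℕ} (c : ℝ → EuclideanSpace ℝ (Fin n))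
    (hLip : ∀ lam lam' : ℝ, ‖c lam - c lam'‖ ≤ |lam - lam'|)
    (lamPrev lamCur : ℝ) (h0 : 0 < lamCur) (hlt : lamCur < lamPrev)
    (hscreen : ‖c lamPrev‖ ≤ 2 * lamCur - lamPrev) :
    ‖c lamCur‖ ≤ lamCur :=
  sequential_strong_rule_general c hLip lamPrev lamCur hlt hscreen
end

section
/- (Closed form of the hierarchical proximal step.) Let the coordinates of ℝ^{1+q} consist of a distinguished coordinate 0 together with disjoint nonempty blocks B_M indexed by M in a finite set 𝓜, and let c₁, c₂, c₃ ≥ 0 and z ∈ ℝ^{1+q}. Define s ∈ ℝ^{1+q} as follows: s₀ = z₀; for each block M, first set t_i = sign(z_i)·(|z_i| − c₁)₊ for all i ∈ B_M, and then s_i = (1 − c₂/‖t^{B_M}‖₂)₊ · t_i for i ∈ B_M (with s restricted to B_M equal to 0 when t^{B_M} = 0). Finally set θ̂ = (1 − c₃/‖s‖₂)₊ · s (with θ̂ = 0 when s = 0). Then θ̂ is the unique minimizer over θ ∈ ℝ^{1+q} of F(θ) = (1/2)‖θ − z‖₂² + c₁ Σ_{i ≠ 0} |θ_i| + c₂ Σ_{M∈𝓜}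 ‖θ^{B_M}‖₂ + c₃ ‖θ‖₂, where θ^{B_M} denotes the restriction of θ to block B_M. -/
open scoped BigOperators

/-!
The objective is `½‖θ - z‖² + P θ` with `P` convex, so `θhat` is its strict minimizer as soon as
`z - θhat` is a subgradient of `P` at `θhat`: then the objective grows by at least
`½‖θ - θhat‖²`. Split `z - θhat = (z - t) + (t - s) + (s - θhat)`. Each of the three steps is a
shrinkage `x ↦ (1 - c/‖x‖)₊ x`, whose residual has norm at most `c` and is aligned with every
nonnegative multiple of its output, hence is a subgradient of `c‖·‖` there. Since `θhat` is a
nonnegative multiple of `s`, which on each block is a nonnegative multiple of `t`, the three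
residuals are subgradients at `θhat` of the three terms of `P`.
-/

open scoped RealInnerProductSpace

section Shrink

variable {E : Type*} [NormedAddCommGroup E] [InnerProductSpace ℝ E]

/-- The proximal map of `c‖·‖`; on `ℝ` it is soft-thresholding. -/
noncomputable def shrink (c : ℝ) (x : E) : E := max (1 - c / ‖x‖) 0 • x

lemma shrink_eq_zero_of_norm_le {c : ℝ} {x : E} (h : ‖x‖ ≤ c) : shrink c x = 0 := by
  rcases eq_or_ne x 0 with rfl | hx
  · simp [shrink]
  have hpos : 0 < ‖x‖ := norm_pos_iff.mpr hx
  have : 1 - c / ‖x‖ ≤ 0 := by rw [sub_nonpos, le_div_iff₀ hpos]; linarith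
  simp [shrink, max_eq_right this]

lemma sub_shrink_of_lt_norm {c : ℝ} (hc : 0 ≤ c) {x : E} (h : c < ‖x‖) :
    x - shrink c x = (c / ‖x‖) • x := by
  have hpos : 0 < ‖x‖ := hc.trans_lt h
  have : 0 ≤ 1 - c / ‖x‖ := by rw [sub_nonneg, div_le_one hpos]; exact h.le
  rw [shrink, max_eq_left this, sub_smul, one_smul, sub_sub_cancel]

lemma norm_sub_shrink_le {c : ℝ} (hc : 0 ≤ c) (x : E) : ‖x - shrink c x‖ ≤ c := by
  rcases le_or_gt ‖x‖ c with h | h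
  · rwa [shrink_eq_zero_of_norm_le h, sub_zero]
  · have hpos : 0 < ‖x‖ := hc.trans_lt h
    rw [sub_shrink_of_lt_norm hc h, norm_smul_of_nonneg (by positivity), div_mul_cancel₀ _ hpos.ne']

lemma inner_sub_shrink_shrink {c : ℝ} (hc : 0 ≤ c) (x : E) :
    ⟪x - shrink c x, shrink c x⟫ = c * ‖shrink c x‖ := by
  rcases le_or_gt ‖x‖ c with h | h
  · simp [shrink_eq_zero_of_norm_le h]
  · have hpos : 0 < ‖x‖ := hc.trans_lt h
    obtain ⟨β, hβ, hβdef⟩ : ∃ β, 0 ≤ β ∧ max (1 - c / ‖x‖) 0 = β := ⟨_, le_max_right _ _, rfl⟩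
    rw [sub_shrink_of_lt_norm hc h, shrink, hβdef, real_inner_smul_left, real_inner_smul_right,
      real_inner_self_eq_norm_sq, norm_smul_of_nonneg hβ]
    field_simp

/-- `r` is a subgradient of `c‖·‖` at every nonnegative multiple of `w`. -/
lemma inner_sub_smul_le_of_norm_le {c k : ℝ} {r w : E} (hr : ‖r‖ ≤ c) (hw : ⟪r, w⟫ = c * ‖w‖)
    (hk : 0 ≤ k) (y : E) : ⟪r, y - k • w⟫ ≤ c * ‖y‖ - c * ‖k • w‖ := by
  have hy : ⟪r, y⟫ ≤ c * ‖y‖ :=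
    (real_inner_le_norm r y).trans (mul_le_mul_of_nonneg_right hr (norm_nonneg y))
  rw [inner_sub_right, real_inner_smul_right, hw, norm_smul_of_nonneg hk]
  linarith

lemma inner_sub_shrink_le {c k : ℝ} (hc : 0 ≤ c) (hk : 0 ≤ k) (x y : E) :
    ⟪x - shrink c x, y - k • shrink c x⟫ ≤ c * ‖y‖ - c * ‖k • shrink c x‖ :=
  inner_sub_smul_le_of_norm_le (norm_sub_shrink_le hc x) (inner_sub_shrink_shrink hc x) hk y

end Shrink

lemma Real.sign_mul_max_sub_eq_shrink (c z : ℝ) :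
    Real.sign z * max (|z| - c) 0 = shrink c z := by
  rcases eq_or_ne z 0 with rfl | hz
  · simp [shrink]
  have hpos : 0 < |z| := abs_pos.mpr hz
  have hsign : Real.sign z * |z| = z := by
    rcases hz.lt_or_gt with h | h
    · rw [Real.sign_of_neg h, abs_of_neg h]; ring
    · rw [Real.sign_of_pos h, abs_of_pos h]; ring
  have hmax : max (|z| - c) 0 = |z| * max (1 - c / |z|) 0 := by
    rw [mul_max_of_nonneg _ _ hpos.le, mul_zero, mul_sub, mul_one, mul_div_cancel₀ _ hpos.ne']
  rw [shrink, Real.norm_eq_abs, smul_eq_mul, hmax, ← mul_assoc, hsign, mul_comm]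

lemma mul_le_of_eq_soft_threshold {c k x sx w : ℝ} (hc : 0 ≤ c) (hk : 0 ≤ k)
    (hsx : sx = Real.sign x * max (|x| - c) 0) (hw : w = k * sx) (y : ℝ) :
    (x - sx) * (y - w) ≤ c * |y| - c * |w| := by
  have h := inner_sub_shrink_le hc hk x y
  rw [← Real.sign_mul_max_sub_eq_shrink, ← hsx, smul_eq_mul, ← hw] at h
  simpa [mul_comm] using h

section Coordinates

variable {α : Type*} [Fintype α]

lemma euclNorm_eq_norm_toLp (f : α → ℝ) : euclNorm f = ‖WithLp.toLp 2 f‖ := by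
  simp [euclNorm, EuclideanSpace.norm_eq]

lemma sum_mul_le_of_eq_group_shrink {c k : ℝ} (hc : 0 ≤ c) (hk : 0 ≤ k) {x sx w : α → ℝ}
    (hsx : ∀ a, sx a = max (1 - c / euclNorm x) 0 * x a) (hw : ∀ a, w a = k * sx a)
    (y : α → ℝ) :
    ∑ a, (x a - sx a) * (y a - w a) ≤ c * euclNorm y - c * euclNorm w := by
  have hw' : WithLp.toLp 2 w = k • WithLp.toLp 2 sx := by
    ext a; simp [hw]
  have hsx' : WithLp.toLp 2 sx = shrink c (WithLp.toLp 2 x) := by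
    ext a; simp [hsx, shrink, euclNorm_eq_norm_toLp]
  have h := inner_sub_shrink_le hc hk (WithLp.toLp 2 x) (WithLp.toLp 2 y)
  rw [← hsx', ← hw', PiLp.inner_apply] at h
  simpa [euclNorm_eq_norm_toLp, mul_comm] using h

lemma half_sum_sq_add_lt_of_sum_mul_le (P : (α → ℝ) → ℝ)
    {z xh x : α → ℝ} (hx : x ≠ xh) (h : ∑ a, (z a - xh a) * (x a - xh a) ≤ P x - P xh) :
    1 / 2 * ∑ a, (xh a - z a) ^ 2 + P xh < 1 / 2 * ∑ a, (x a - z a) ^ 2 + P x := by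
  have hexpand : ∑ a, (x a - z a) ^ 2 = ∑ a, (xh a - z a) ^ 2 + ∑ a, (x a - xh a) ^ 2
      - 2 * ∑ a, (z a - xh a) * (x a - xh a) := by
    simp only [Finset.mul_sum, ← Finset.sum_add_distrib, ← Finset.sum_sub_distrib]
    exact Finset.sum_congr rfl fun a _ => by ring
  obtain ⟨a, ha⟩ := Function.ne_iff.mp hx
  have hgap : 0 < ∑ a, (x a - xh a) ^ 2 :=
    Finset.sum_pos' (fun _ _ => sq_nonneg _)
      ⟨a, Finset.mem_univ a, sq_pos_of_ne_zero (sub_ne_zero.mpr ha)⟩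
  linarith

end Coordinates

section Hierarchical

variable {𝓜 : Type*} [Fintype 𝓜] (B : 𝓜 → Type*) [∀ M, Fintype (B M)]

noncomputable def hierPenalty (c₁ c₂ c₃ : ℝ) (θ : Option ((M : 𝓜) × B M) → ℝ) : ℝ :=
  c₁ * (∑ M : 𝓜, ∑ b : B M, |θ (some ⟨M, b⟩)|)
    + c₂ * (∑ M : 𝓜, euclNorm (fun b : B M => θ (some ⟨M, b⟩)))
    + c₃ * euclNorm θ

variable {B}

lemma sum_mul_le_hierPenalty_sub {c₁ c₂ c₃ : ℝ} {z t s θhat θ : Option ((M : 𝓜) × B M) → ℝ}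
    (hs0 : s none = z none)
    (hcoord : ∀ (M : 𝓜) (b : B M),
      (z (some ⟨M, b⟩) - t (some ⟨M, b⟩)) * (θ (some ⟨M, b⟩) - θhat (some ⟨M, b⟩))
        ≤ c₁ * |θ (some ⟨M, b⟩)| - c₁ * |θhat (some ⟨M, b⟩)|)
    (hblock : ∀ M : 𝓜,
      ∑ b : B M, (t (some ⟨M, b⟩) - s (some ⟨M, b⟩)) * (θ (some ⟨M, b⟩) - θhat (some ⟨M, b⟩))
        ≤ c₂ * euclNorm (fun b : B M => θ (some ⟨M, b⟩))
          - c₂ * euclNorm (fun b : B M => θhat (some ⟨M, b⟩)))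
    (hglobal : ∑ i, (s i - θhat i) * (θ i - θhat i) ≤ c₃ * euclNorm θ - c₃ * euclNorm θhat) :
    ∑ i, (z i - θhat i) * (θ i - θhat i)
      ≤ hierPenalty B c₁ c₂ c₃ θ - hierPenalty B c₁ c₂ c₃ θhat := by
  calc ∑ i, (z i - θhat i) * (θ i - θhat i)
      = ∑ i, (s i - θhat i) * (θ i - θhat i)
        + ∑ M : 𝓜, ∑ b : B M,
          ((z (some ⟨M, b⟩) - t (some ⟨M, b⟩)) * (θ (some ⟨M, b⟩) - θhat (some ⟨M, b⟩))
            + (t (some ⟨M, b⟩) - s (some ⟨M, b⟩)) * (θ (some ⟨M, b⟩) - θhat (some ⟨M, b⟩))) := by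
        simp only [Fintype.sum_option, Fintype.sum_sigma, hs0, add_assoc, ← Finset.sum_add_distrib]
        congr 1
        exact Finset.sum_congr rfl fun M _ => Finset.sum_congr rfl fun b _ => by ring
    _ ≤ (c₃ * euclNorm θ - c₃ * euclNorm θhat)
        + ∑ M : 𝓜, ((c₁ * ∑ b : B M, |θ (some ⟨M, b⟩)| - c₁ * ∑ b : B M, |θhat (some ⟨M, b⟩)|)
          + (c₂ * euclNorm (fun b : B M => θ (some ⟨M, b⟩))
            - c₂ * euclNorm (fun b : B M => θhat (some ⟨M, b⟩)))) := by
        refine add_le_add hglobal (Finset.sum_le_sum fun M _ => ?_)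
        rw [Finset.sum_add_distrib, Finset.mul_sum, Finset.mul_sum, ← Finset.sum_sub_distrib]
        exact add_le_add (Finset.sum_le_sum fun b _ => hcoord M b) (hblock M)
    _ = hierPenalty B c₁ c₂ c₃ θ - hierPenalty B c₁ c₂ c₃ θhat := by
        simp only [hierPenalty, Finset.sum_add_distrib, Finset.sum_sub_distrib, Finset.mul_sum]
        ring

end Hierarchical

theorem hier_prox_closed_form_general {𝓜 : Type*} [Fintype 𝓜] (B : 𝓜 → Type*)
    [∀ M, Fintype (B M)]
    (c₁ c₂ c₃ : ℝ) (hc₁ : 0 ≤ c₁) (hc₂ : 0 ≤ c₂) (hc₃ : 0 ≤ c₃)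
    (z t s θhat : Option ((M : 𝓜) × B M) → ℝ)
    (ht : ∀ (M : 𝓜) (b : B M),
      t (some ⟨M, b⟩) = Real.sign (z (some ⟨M, b⟩)) * max (|z (some ⟨M, b⟩)| - c₁) 0)
    (hs0 : s none = z none)
    (hs : ∀ (M : 𝓜) (b : B M),
      s (some ⟨M, b⟩) =
        max (1 - c₂ / euclNorm (fun b' : B M => t (some ⟨M, b'⟩))) 0 * t (some ⟨M, b⟩))
    (hθhat : θhat = fun i => max (1 - c₃ / euclNorm s) 0 * s i) :
    ∀ θ : Option ((M : 𝓜) × B M) → ℝ, θ ≠ θhat →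
      (1 / 2) * (∑ i, (θhat i - z i) ^ 2)
          + c₁ * (∑ M : 𝓜, ∑ b : B M, |θhat (some ⟨M, b⟩)|)
          + c₂ * (∑ M : 𝓜, euclNorm (fun b : B M => θhat (some ⟨M, b⟩)))
          + c₃ * euclNorm θhat
        < (1 / 2) * (∑ i, (θ i - z i) ^ 2)
          + c₁ * (∑ M : 𝓜, ∑ b : B M, |θ (some ⟨M, b⟩)|)
          + c₂ * (∑ M : 𝓜, euclNorm (fun b : B M => θ (some ⟨M, b⟩)))
          + c₃ * euclNorm θ := by
  intro θ hθ
  set γ := max (1 - c₃ / euclNorm s) 0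
  have hγ : 0 ≤ γ := le_max_right _ _
  have hθs : ∀ i, θhat i = γ * s i := fun i => by rw [hθhat]
  have hsub := sum_mul_le_hierPenalty_sub hs0
    (fun M b => mul_le_of_eq_soft_threshold hc₁ (mul_nonneg hγ (le_max_right _ _)) (ht M b)
      (by rw [hθs, hs M b, mul_assoc]) _)
    (fun M => sum_mul_le_of_eq_group_shrink hc₂ hγ (hs M) (fun b => hθs _) _)
    (sum_mul_le_of_eq_group_shrink hc₃ zero_le_one hθs (fun i => (one_mul _).symm) θ)
  simpa only [hierPenalty, add_assoc] using half_sum_sq_add_lt_of_sum_mul_le _ hθ hsub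

/-- **Closed form of the hierarchical proximal step.**
The coordinates of `ℝ^{1+q}` consist of a distinguished coordinate (`none`)
and disjoint nonempty blocks `B M`, `M ∈ 𝓜`.  Given `c₁, c₂, c₃ ≥ 0` and `z`,
define `s` by `s₀ = z₀` and, on each block `M`, first soft-threshold
`t_i = sign(z_i)·(|z_i| − c₁)₊` and then group-shrink
`s_i = (1 − c₂/‖t^{B_M}‖₂)₊ · t_i` (so `s ≡ 0` on `B_M` when `t^{B_M} = 0`);
finally `θ̂ = (1 − c₃/‖s‖₂)₊ · s` (with `θ̂ = 0` when `s = 0`; Lean's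
convention `x/0 = 0` makes the formulas give exactly these values).
Then `θ̂` is the unique minimizer over `θ ∈ ℝ^{1+q}` of
`F(θ) = (1/2)‖θ − z‖₂² + c₁ Σ_{i≠0} |θ_i| + c₂ Σ_M ‖θ^{B_M}‖₂ + c₃‖θ‖₂`. -/
theorem hier_prox_closed_form {𝓜 : Type*} [Fintype 𝓜] (B : 𝓜 → Type*)
    [∀ M, Fintype (B M)] [∀ M, Nonempty (B M)]
    (c₁ c₂ c₃ : ℝ) (hc₁ : 0 ≤ c₁) (hc₂ : 0 ≤ c₂) (hc₃ : 0 ≤ c₃)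
    (z t s θhat : Option ((M : 𝓜) × B M) → ℝ)
    (ht : ∀ (M : 𝓜) (b : B M),
      t (some ⟨M, b⟩) = Real.sign (z (some ⟨M, b⟩)) * max (|z (some ⟨M, b⟩)| - c₁) 0)
    (hs0 : s none = z none)
    (hs : ∀ (M : 𝓜) (b : B M),
      s (some ⟨M, b⟩) =
        max (1 - c₂ / euclNorm (fun b' : B M => t (some ⟨M, b'⟩))) 0 * t (some ⟨M, b⟩))
    (hθhat : θhat = fun i => max (1 - c₃ / euclNorm s) 0 * s i) :
    ∀ θ : Option ((M : 𝓜) × B M) → ℝ, θ ≠ θhat →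
      (1 / 2) * (∑ i, (θhat i - z i) ^ 2)
          + c₁ * (∑ M : 𝓜, ∑ b : B M, |θhat (some ⟨M, b⟩)|)
          + c₂ * (∑ M : 𝓜, euclNorm (fun b : B M => θhat (some ⟨M, b⟩)))
          + c₃ * euclNorm θhat
        < (1 / 2) * (∑ i, (θ i - z i) ^ 2)
          + c₁ * (∑ M : 𝓜, ∑ b : B M, |θ (some ⟨M, b⟩)|)
          + c₂ * (∑ M : 𝓜, euclNorm (fun b : B M => θ (some ⟨M, b⟩)))
          + c₃ * euclNorm θ :=
  hier_prox_closed_form_general B c₁ c₂ c₃ hc₁ hc₂ hc₃ z t s θhat ht hs0 hs hθhat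
end
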